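/- Let Γ ∈ 𝓕_i(a_1,…,a_q; b_1,…,b_q), suppose i + 1 is not a sink of Γ and i is a transit point of Γ. Let M_1(Γ) be the graph obtained from Γ by replacing its unique edge of the form (s, i) by (s, i + 1). Then M_1(Γ) ∈ 𝓕_i(a_1,…,a_q, i; b_1,…,b_q, i + 1) and sgn_i(M_1(Γ)) = −sgn_i(Γ). -/

import Mathlib

/-!
Rerouting the edge `(s, i)` to the isolated vertex `i + 1` turns `i` into a source and `i + 1`
into a sink and changes no other in- or out-degree, so `M_1(Γ)` is a flow whose transit points
are those of `Γ` except `i`. Its paths are those of `Γ` except that the source whose path ran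
through `s` now ends at `i + 1`, while the new source `i` takes over that source's old sink.
Hence the linking permutation changes by a transposition, while the exponent of `-1` gains
`(i + 1) - i = 1` from the new sink and loses `1` from the lost transit point.
-/

open Finset

abbrev FlowGraph : Type := Finset (ℤ × ℤ)

def beginsAt (E : FlowGraph) (r : ℤ) : Finset (ℤ × ℤ) := E.filter (fun e => e.1 = r)

def endsAt (E : FlowGraph) (r : ℤ) : Finset (ℤ × ℤ) := E.filter (fun e => e.2 = r)

/-- `E` is a flow with set of sources `A` and set of sinks `B`:
every edge `(s,t)` has `s < t`; the sources and sinks are pairwise distinct;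
exactly one edge begins at each source (and none ends there); exactly one edge
ends at each sink (and none begins there); and every other vertex either meets
no edge, or exactly one edge ends at it and exactly one edge begins at it
(such a vertex is a transit point). -/
structure IsFlow (E : FlowGraph) (A B : Finset ℤ) : Prop where
  edge_lt : ∀ e ∈ E, e.1 < e.2
  disjAB : Disjoint A B
  source_out : ∀ a ∈ A, (beginsAt E a).card = 1
  source_in : ∀ a ∈ A, endsAt E a = ∅
  sink_in : ∀ b ∈ B, (endsAt E b).card = 1
  sink_out : ∀ b ∈ B, beginsAt E b = ∅
  transit : ∀ r : ℤ, r ∉ A → r ∉ B →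
      (beginsAt E r = ∅ ∧ endsAt E r = ∅) ∨
      ((beginsAt E r).card = 1 ∧ (endsAt E r).card = 1)

def transitSet (E : FlowGraph) (A B : Finset ℤ) : Finset ℤ :=
  ((E.image Prod.fst) ∪ (E.image Prod.snd)) \ (A ∪ B)

def IsTransitPoint (E : FlowGraph) (A B : Finset ℤ) (r : ℤ) : Prop :=
  r ∈ transitSet E A B

/-- Two vertices are linked if they lie in the same connected component of `E`. -/
def Linked (E : FlowGraph) (x y : ℤ) : Prop :=
  Relation.ReflTransGen (fun u v => (u, v) ∈ E ∨ (v, u) ∈ E) x y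

def srcSet {q : ℕ} (a : Fin q → ℤ) : Finset ℤ := Finset.image a Finset.univ

/-- Membership in `𝓕_i(a_1,…,a_q; b_1,…,b_q)` : a flow with sources the `a j`,
sinks the `b j`, and no transit point greater than `i`. -/
def InF {q : ℕ} (i : ℤ) (a b : Fin q → ℤ) (E : FlowGraph) : Prop :=
  IsFlow E (srcSet a) (srcSet b) ∧
  ∀ r : ℤ, IsTransitPoint E (srcSet a) (srcSet b) r → r ≤ i

/-- `σ` is the linking permutation: the source `a j` is linked to the sink `b (σ j)`. -/
def IsLinkingPerm {q : ℕ} (E : FlowGraph) (a b : Fin q → ℤ) (σ : Equiv.Perm (Fin q)) : Prop :=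
  ∀ j : Fin q, Linked E (a j) (b (σ j))

/-- The `i`-sign of a flow `E` (with sources `A`, sinks given by the family `b` and
sinks-set `B`), computed from a linking permutation `σ`:
`sgn σ * (-1) ^ (Σ_j (b_j - i) + #transit points)`. -/
def signValue {q : ℕ} (i : ℤ) (b : Fin q → ℤ) (σ : Equiv.Perm (Fin q))
    (E : FlowGraph) (A B : Finset ℤ) : ℤ :=
  (Equiv.Perm.sign σ : ℤ) *
    (-1) ^ ((∑ j : Fin q, (b j - i)).toNat + (transitSet E A B).card)

def vertexSet (E : FlowGraph) : Finset ℤ := E.image Prod.fst ∪ E.image Prod.snd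

lemma mem_vertexSet {E : FlowGraph} {v : ℤ} :
    v ∈ vertexSet E ↔ (beginsAt E v).Nonempty ∨ (endsAt E v).Nonempty := by
  simp [vertexSet, beginsAt, endsAt, Finset.Nonempty]

lemma not_mem_vertexSet {E : FlowGraph} {v : ℤ} :
    v ∉ vertexSet E ↔ beginsAt E v = ∅ ∧ endsAt E v = ∅ := by
  simp [mem_vertexSet, not_nonempty_iff_eq_empty]

lemma mem_transitSet {E : FlowGraph} {A B : Finset ℤ} {v : ℤ} :
    v ∈ transitSet E A B ↔ v ∈ vertexSet E ∧ v ∉ A ∧ v ∉ B := by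
  simp [transitSet, vertexSet]

lemma srcSet_snoc {q : ℕ} (a : Fin q → ℤ) (x : ℤ) :
    srcSet (Fin.snoc a x : Fin (q + 1) → ℤ) = insert x (srcSet a) := by
  ext; simp [srcSet, Fin.exists_fin_succ', or_comm, eq_comm]

lemma Equiv.Perm.sign_eq_neg_of_apply_castSucc {q : ℕ} (σ : Equiv.Perm (Fin q))
    (τ : Equiv.Perm (Fin (q + 1)))
    (h : ∀ j, τ j.castSucc = Fin.last q ∨ τ j.castSucc = (σ j).castSucc)
    (hlast : τ (Fin.last q) ≠ Fin.last q) :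
    Equiv.Perm.sign τ = - Equiv.Perm.sign σ := by
  obtain ⟨j₀, hj₀⟩ : ∃ j₀ : Fin q, τ j₀.castSucc = Fin.last q := by
    obtain ⟨j₀, hj₀⟩ := (Fin.exists_castSucc_eq (i := τ⁻¹ (Fin.last q))).mpr fun h' =>
      hlast (Equiv.Perm.inv_eq_iff_eq.mp h').symm
    exact ⟨j₀, Equiv.Perm.eq_inv_iff_eq.mp hj₀⟩
  have hτ : ∀ j ≠ j₀, τ j.castSucc = (σ j).castSucc := fun j hj =>
    (h j).resolve_left fun hj' =>
      hj (Fin.castSucc_injective _ (τ.injective (hj'.trans hj₀.symm)))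
  have hτlast : τ (Fin.last q) = (σ j₀).castSucc := by
    obtain ⟨m, hm⟩ := Fin.exists_castSucc_eq.mpr hlast
    obtain rfl : σ.symm m = j₀ := by
      by_contra hne
      have := τ.injective ((hτ _ hne).trans (by rw [Equiv.apply_symm_apply, hm]))
      exact (Fin.castSucc_lt_last _).ne this
    rw [← hm, Equiv.apply_symm_apply]
  have hext : τ * Equiv.swap j₀.castSucc (Fin.last q) =
      σ.viaFintypeEmbedding Fin.castSuccEmb := by
    ext x : 1
    induction x using Fin.lastCases with
    | last =>
      rw [Equiv.Perm.mul_apply, Equiv.swap_apply_right, hj₀,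
        Equiv.Perm.viaFintypeEmbedding_apply_notMem_range]
      rintro ⟨k, hk⟩
      exact (Fin.castSucc_lt_last k).ne hk
    | cast j =>
      have := Equiv.Perm.viaFintypeEmbedding_apply_image σ Fin.castSuccEmb j
      simp only [Fin.coe_castSuccEmb] at this
      rw [this, Equiv.Perm.mul_apply]
      rcases eq_or_ne j j₀ with rfl | hj
      · rw [Equiv.swap_apply_left, hτlast]
      · rw [Equiv.swap_apply_of_ne_of_ne (fun h' => hj (Fin.castSucc_injective _ h'))
          (Fin.castSucc_lt_last _).ne, hτ j hj]
  have := congrArg Equiv.Perm.sign hext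
  rw [map_mul, Equiv.Perm.sign_swap (Fin.castSucc_lt_last _).ne,
    Equiv.Perm.viaFintypeEmbedding_sign] at this
  rw [← this, mul_neg_one, neg_neg]

namespace IsFlow

variable {E : FlowGraph} {A B : Finset ℤ}

lemma card_beginsAt_le_one (hf : IsFlow E A B) (v : ℤ) : (beginsAt E v).card ≤ 1 := by
  by_cases hA : v ∈ A
  · exact (hf.source_out v hA).le
  by_cases hB : v ∈ B
  · simp [hf.sink_out v hB]
  rcases hf.transit v hA hB with ⟨h, -⟩ | ⟨h, -⟩ <;> simp [h]

lemma card_endsAt_le_one (hf : IsFlow E A B) (v : ℤ) : (endsAt E v).card ≤ 1 := by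
  by_cases hA : v ∈ A
  · simp [hf.source_in v hA]
  by_cases hB : v ∈ B
  · exact (hf.sink_in v hB).le
  rcases hf.transit v hA hB with ⟨-, h⟩ | ⟨-, h⟩ <;> simp [h]

lemma snd_eq_of_mem (hf : IsFlow E A B) {v x y : ℤ} (hx : (v, x) ∈ E) (hy : (v, y) ∈ E) :
    x = y :=
  congrArg Prod.snd <| Finset.card_le_one.mp (hf.card_beginsAt_le_one v) _
    (mem_filter.mpr ⟨hx, rfl⟩) _ (mem_filter.mpr ⟨hy, rfl⟩)

lemma fst_eq_of_mem (hf : IsFlow E A B) {v x y : ℤ} (hx : (x, v) ∈ E) (hy : (y, v) ∈ E) :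
    x = y :=
  congrArg Prod.fst <| Finset.card_le_one.mp (hf.card_endsAt_le_one v) _
    (mem_filter.mpr ⟨hx, rfl⟩) _ (mem_filter.mpr ⟨hy, rfl⟩)

lemma not_mem_of_mem_sink (hf : IsFlow E A B) {v w : ℤ} (hv : v ∈ B) : (v, w) ∉ E := fun h =>
  (eq_empty_iff_forall_notMem.mp (hf.sink_out v hv)) _ (mem_filter.mpr ⟨h, rfl⟩)

end IsFlow

def Reaches (E : FlowGraph) : ℤ → ℤ → Prop :=
  Relation.ReflTransGen fun u v => (u, v) ∈ E

namespace Reaches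

variable {E F : FlowGraph} {x y : ℤ}

lemma le (hlt : ∀ e ∈ E, e.1 < e.2) (h : Reaches E x y) : x ≤ y := by
  induction h with
  | refl => rfl
  | tail _ he ih => exact ih.trans (hlt _ he).le

lemma mono (hEF : E ⊆ F) (h : Reaches E x y) : Reaches F x y :=
  Relation.ReflTransGen.mono (fun _ _ he => hEF he) _ _ h

lemma linked (h : Reaches E x y) : Linked E x y :=
  Relation.ReflTransGen.mono (fun _ _ => Or.inl) _ _ h

/-- A path to `y` only uses edges ending at most at `y`. -/
lemma erase_of_lt (hlt : ∀ e ∈ E, e.1 < e.2) (h : Reaches E x y) {e : ℤ × ℤ}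
    (he : y < e.2) : Reaches (E.erase e) x y := by
  induction h using Relation.ReflTransGen.head_induction_on with
  | refl => exact .refl
  | @head u v huv hvy ih =>
    refine .head (mem_erase.mpr ⟨?_, huv⟩) ih
    rintro rfl
    exact absurd (Reaches.le hlt hvy) (not_le.mpr he)

lemma erase_of_not_reaches (h : Reaches E x y) {u w : ℤ} (hu : ¬ Reaches E x u) :
    Reaches (E.erase (u, w)) x y := by
  induction h using Relation.ReflTransGen.head_induction_on with
  | refl => exact .refl
  | @head x' v hxv _ ih =>
    refine .head (mem_erase.mpr ⟨?_, hxv⟩) (ih fun hvu => hu (.head hxv hvu))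
    rintro ⟨⟩
    exact hu .refl

lemma eq_or_reaches_of_forall_pred (h : Reaches E x y) {p : ℤ}
    (hp : ∀ u, (u, y) ∈ E → u = p) : x = y ∨ Reaches E x p := by
  rcases Relation.ReflTransGen.cases_tail h with rfl | ⟨u, hxu, huy⟩
  · exact .inl rfl
  · exact .inr (hp u huy ▸ hxu)

end Reaches

lemma Linked.symm {E : FlowGraph} {x y : ℤ} (h : Linked E x y) : Linked E y x := by
  induction h with
  | refl => exact .refl
  | tail _ hyz ih => exact .head hyz.symm ih

namespace IsFlow

variable {E : FlowGraph} {A B : Finset ℤ}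

/-- Out-degrees are at most one and sinks have none, so an undirected path to a sink can be
followed forwards. -/
lemma reaches_of_linked (hf : IsFlow E A B) {x v : ℤ} (hv : v ∈ B) (h : Linked E x v) :
    Reaches E x v := by
  have h' := h.symm
  clear h
  induction h' with
  | refl => exact .refl
  | @tail w y _ hwy ih =>
    rcases hwy with hwy | hyw
    · rcases Relation.ReflTransGen.cases_head ih with rfl | ⟨z, hwz, hzv⟩
      · exact absurd hwy (hf.not_mem_of_mem_sink hv)
      · exact hf.snd_eq_of_mem hwy hwz ▸ hzv
    · exact .head hyw ih

lemma eq_of_linked (hf : IsFlow E A B) {v w : ℤ} (hv : v ∈ B) (hw : w ∈ B)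
    (h : Linked E v w) : v = w := by
  rcases Relation.ReflTransGen.cases_head (hf.reaches_of_linked hw h) with rfl | ⟨z, hvz, -⟩
  · rfl
  · exact absurd hvz (hf.not_mem_of_mem_sink hv)

end IsFlow

/-- `reroute E s r r'` replaces the edge `(s, r)` by `(s, r')`; `reroute E s i (i + 1)` is the
paper's `M_1(Γ)`. -/
def reroute (E : FlowGraph) (s r r' : ℤ) : FlowGraph := insert (s, r') (E.erase (s, r))

section reroute

variable {E : FlowGraph} {A B : Finset ℤ} {s r r' : ℤ}

lemma mem_reroute {e : ℤ × ℤ} :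
    e ∈ reroute E s r r' ↔ e = (s, r') ∨ e ≠ (s, r) ∧ e ∈ E := by
  rw [reroute, mem_insert, mem_erase]

lemma beginsAt_reroute_of_ne {v : ℤ} (hv : v ≠ s) :
    beginsAt (reroute E s r r') v = beginsAt E v := by
  ext ⟨x, y⟩
  simp only [beginsAt, mem_filter, mem_reroute]
  grind

lemma endsAt_reroute_of_ne {v : ℤ} (hr : v ≠ r) (hr' : v ≠ r') :
    endsAt (reroute E s r r') v = endsAt E v := by
  ext ⟨x, y⟩
  simp only [endsAt, mem_filter, mem_reroute]
  grind

lemma Reaches.linked_reroute {x y : ℤ} (h : Reaches E x y)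
    (hx : ¬ Reaches E x s) : Linked (reroute E s r r') x y :=
  ((h.erase_of_not_reaches hx).mono (subset_insert _ _)).linked

structure Reroutable (E : FlowGraph) (A B : Finset ℤ) (s r r' : ℤ) : Prop where
  isFlow : IsFlow E A B
  mem : (s, r) ∈ E
  not_mem_sinks : r ∉ B
  new_not_mem_sources : r' ∉ A
  new_not_mem_sinks : r' ∉ B
  new_not_mem_vertexSet : r' ∉ vertexSet E
  lt_new : s < r'

namespace Reroutable

lemma not_mem_sources (H : Reroutable E A B s r r') : r ∉ A := fun hr =>
  (eq_empty_iff_forall_notMem.mp (H.isFlow.source_in r hr)) _ (mem_filter.mpr ⟨H.mem, rfl⟩)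

lemma ne_new (H : Reroutable E A B s r r') : r ≠ r' := by
  rintro rfl
  exact H.new_not_mem_vertexSet (mem_union_right _ (mem_image_of_mem Prod.snd H.mem))

lemma card_endsAt (H : Reroutable E A B s r r') : (endsAt E r).card = 1 :=
  le_antisymm (H.isFlow.card_endsAt_le_one r) (card_pos.mpr ⟨_, mem_filter.mpr ⟨H.mem, rfl⟩⟩)

lemma card_beginsAt (H : Reroutable E A B s r r') : (beginsAt E r).card = 1 := by
  rcases H.isFlow.transit r H.not_mem_sources H.not_mem_sinks with ⟨-, h⟩ | ⟨h, -⟩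
  · simpa [h] using H.card_endsAt
  · exact h

lemma card_beginsAt_reroute (H : Reroutable E A B s r r') (v : ℤ) :
    (beginsAt (reroute E s r r') v).card = (beginsAt E v).card := by
  rcases ne_or_eq v s with hv | rfl
  · rw [beginsAt_reroute_of_ne hv]
  have hE : beginsAt E v = {(v, r)} := by
    ext ⟨x, y⟩
    simp only [beginsAt, mem_filter, mem_singleton, Prod.mk.injEq]
    exact ⟨fun ⟨he, hx⟩ => ⟨hx, H.isFlow.snd_eq_of_mem (hx ▸ he) H.mem⟩,
      fun ⟨hx, hy⟩ => ⟨hx ▸ hy ▸ H.mem, hx⟩⟩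
  have hE' : beginsAt (reroute E v r r') v = {(v, r')} := by
    ext ⟨x, y⟩
    simp only [beginsAt, mem_filter, mem_reroute, mem_singleton, Prod.mk.injEq]
    have := fun h => H.isFlow.snd_eq_of_mem (x := y) h H.mem
    grind
  rw [hE, hE', card_singleton, card_singleton]

lemma endsAt_reroute_old (H : Reroutable E A B s r r') : endsAt (reroute E s r r') r = ∅ := by
  ext ⟨x, y⟩
  simp only [endsAt, mem_filter, mem_reroute, notMem_empty, iff_false]
  have := H.ne_new
  have := fun h => H.isFlow.fst_eq_of_mem (x := x) h H.mem
  grind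

lemma endsAt_reroute_new (H : Reroutable E A B s r r') :
    endsAt (reroute E s r r') r' = {(s, r')} := by
  ext ⟨x, y⟩
  have : (x, r') ∉ E := fun h =>
    H.new_not_mem_vertexSet (mem_union_right _ (mem_image_of_mem Prod.snd h))
  simp only [endsAt, mem_filter, mem_reroute, mem_singleton]
  grind

lemma isFlow_reroute (H : Reroutable E A B s r r') :
    IsFlow (reroute E s r r') (insert r A) (insert r' B) where
  edge_lt e he := by
    rcases mem_reroute.mp he with rfl | ⟨-, he⟩
    · exact H.lt_new
    · exact H.isFlow.edge_lt e he
  disjAB := by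
    simp only [disjoint_insert_left, disjoint_insert_right, mem_insert, not_or]
    exact ⟨⟨H.ne_new.symm, H.new_not_mem_sources⟩, H.not_mem_sinks, H.isFlow.disjAB⟩
  source_out v hv := by
    rw [H.card_beginsAt_reroute]
    rcases mem_insert.mp hv with rfl | hv
    · exact H.card_beginsAt
    · exact H.isFlow.source_out v hv
  source_in v hv := by
    rcases mem_insert.mp hv with rfl | hv
    · exact H.endsAt_reroute_old
    · rw [endsAt_reroute_of_ne (ne_of_mem_of_not_mem hv H.not_mem_sources)
        (ne_of_mem_of_not_mem hv H.new_not_mem_sources)]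
      exact H.isFlow.source_in v hv
  sink_in v hv := by
    rcases mem_insert.mp hv with rfl | hv
    · rw [H.endsAt_reroute_new, card_singleton]
    · rw [endsAt_reroute_of_ne (ne_of_mem_of_not_mem hv H.not_mem_sinks)
        (ne_of_mem_of_not_mem hv H.new_not_mem_sinks)]
      exact H.isFlow.sink_in v hv
  sink_out v hv := by
    rw [← card_eq_zero, H.card_beginsAt_reroute, card_eq_zero]
    rcases mem_insert.mp hv with rfl | hv
    · exact (not_mem_vertexSet.mp H.new_not_mem_vertexSet).1
    · exact H.isFlow.sink_out v hv
  transit v hvA hvB := by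
    simp only [mem_insert, not_or] at hvA hvB
    simp only [← card_eq_zero, H.card_beginsAt_reroute, endsAt_reroute_of_ne hvA.1 hvB.1]
    simpa only [← card_eq_zero] using H.isFlow.transit v hvA.2 hvB.2

lemma vertexSet_reroute (H : Reroutable E A B s r r') :
    vertexSet (reroute E s r r') = insert r' (vertexSet E) := by
  ext v
  simp only [mem_insert, mem_vertexSet, ← card_pos, H.card_beginsAt_reroute]
  rcases eq_or_ne v r' with rfl | hv'
  · simp [H.endsAt_reroute_new]
  rcases eq_or_ne v r with rfl | hv
  · simp [H.card_beginsAt]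
  · simp [hv', endsAt_reroute_of_ne hv hv']

lemma transitSet_reroute (H : Reroutable E A B s r r') :
    transitSet (reroute E s r r') (insert r A) (insert r' B) = (transitSet E A B).erase r := by
  ext v
  simp only [mem_transitSet, H.vertexSet_reroute, mem_erase, mem_insert]
  have := H.new_not_mem_vertexSet
  grind

lemma linked_new_iff (H : Reroutable E A B s r r') {x : ℤ} :
    Linked (reroute E s r r') x r' ↔ x = r' ∨ Reaches E x s := by
  constructor
  · intro h
    have hx := H.isFlow_reroute.reaches_of_linked (mem_insert_self _ _) h
    refine (hx.eq_or_reaches_of_forall_pred (p := s) fun u hu => ?_).imp_right fun hxs => ?_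
    · have hu : (u, r') ∈ endsAt (reroute E s r r') r' := mem_filter.mpr ⟨hu, rfl⟩
      rw [H.endsAt_reroute_new, mem_singleton] at hu
      exact congrArg Prod.fst hu
    · exact (hxs.erase_of_lt H.isFlow_reroute.edge_lt (e := (s, r')) H.lt_new).mono
        ((erase_insert_subset _ _).trans (erase_subset _ _))
  · rintro (rfl | hxs)
    · exact .refl
    · have hxs' := hxs.erase_of_lt H.isFlow.edge_lt (e := (s, r)) (H.isFlow.edge_lt _ H.mem)
      exact Reaches.linked (.tail (hxs'.mono (subset_insert _ _)) (mem_insert_self _ _))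

lemma sign_linkingPerm_reroute {q : ℕ} {a b : Fin q → ℤ} (H : Reroutable E (srcSet a) (srcSet b) s r r')
    (hb : Function.Injective b) {σ : Equiv.Perm (Fin q)} {τ : Equiv.Perm (Fin (q + 1))}
    (hσ : IsLinkingPerm E a b σ)
    (hτ : IsLinkingPerm (reroute E s r r') (Fin.snoc a r) (Fin.snoc b r') τ) :
    Equiv.Perm.sign τ = - Equiv.Perm.sign σ := by
  have hf' := H.isFlow_reroute
  rw [← srcSet_snoc, ← srcSet_snoc] at hf'
  have hinj : Function.Injective (Fin.snoc b r' : Fin (q + 1) → ℤ) :=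
    Fin.snoc_injective_of_injective hb (by simpa [srcSet] using H.new_not_mem_sinks)
  have hsinks (k l : Fin (q + 1)) (h : Linked (reroute E s r r')
      ((Fin.snoc b r' : Fin (q + 1) → ℤ) k) ((Fin.snoc b r' : Fin (q + 1) → ℤ) l)) : k = l :=
    hinj <| hf'.eq_of_linked (mem_image_of_mem _ (mem_univ k)) (mem_image_of_mem _ (mem_univ l)) h
  refine Equiv.Perm.sign_eq_neg_of_apply_castSucc σ τ (fun j => ?_) fun hlast => ?_
  · have hτj := (hτ j.castSucc).symm
    rw [Fin.snoc_castSucc] at hτj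
    by_cases hj : Reaches E (a j) s
    · refine .inl (hsinks _ _ ?_)
      rw [Fin.snoc_last]
      exact hτj.trans (H.linked_new_iff.mpr (.inr hj))
    · refine .inr (hsinks _ _ ?_)
      rw [Fin.snoc_castSucc]
      have hpath := H.isFlow.reaches_of_linked (mem_image_of_mem _ (mem_univ _)) (hσ j)
      exact hτj.trans (hpath.linked_reroute hj)
  · have hr := hτ (Fin.last q)
    rw [Fin.snoc_last, hlast, Fin.snoc_last] at hr
    rcases H.linked_new_iff.mp hr with h | h
    · exact H.ne_new h
    · exact (h.le H.isFlow.edge_lt).not_gt (H.isFlow.edge_lt _ H.mem)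

end Reroutable

end reroute

lemma signValue_snoc_add_one {q : ℕ} {i : ℤ} {b : Fin q → ℤ} {σ : Equiv.Perm (Fin q)}
    {τ : Equiv.Perm (Fin (q + 1))} {E E' : FlowGraph} {A B A' B' : Finset ℤ}
    (hsign : Equiv.Perm.sign τ = - Equiv.Perm.sign σ) (hb : ∀ j, i < b j)
    (hT : transitSet E' A' B' = (transitSet E A B).erase i) (hi : i ∈ transitSet E A B) :
    signValue i (Fin.snoc b (i + 1)) τ E' A' B' = - signValue i b σ E A B := by
  have hsum : ∑ j, ((Fin.snoc b (i + 1) : Fin (q + 1) → ℤ) j - i) = ∑ j, (b j - i) + 1 := by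
    rw [Fin.sum_univ_castSucc]
    simp only [Fin.snoc_castSucc, Fin.snoc_last]
    ring
  -- `signValue` takes `toNat` of this sum, so its nonnegativity matters.
  have hS : 0 ≤ ∑ j, (b j - i) := sum_nonneg fun j _ => (sub_pos.mpr (hb j)).le
  have hT0 : 0 < (transitSet E A B).card := card_pos.mpr ⟨i, hi⟩
  have hexp : (∑ j, (b j - i) + 1).toNat + ((transitSet E A B).card - 1) =
      (∑ j, (b j - i)).toNat + (transitSet E A B).card := by omega
  rw [signValue, signValue, hsum, hT, card_erase_of_mem hi, hexp, hsign, Units.val_neg, neg_mul]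

theorem statement5_general {q : ℕ} (i : ℤ) (a b : Fin q → ℤ)
    (hb : StrictAnti b)
    (hai : ∀ j, a j ≤ i) (hbi : ∀ j, i < b j)
    (E : FlowGraph) (hE : InF i a b E)
    (hsink : ∀ j, b j ≠ i + 1)
    (htr : IsTransitPoint E (srcSet a) (srcSet b) i)
    (s : ℤ) (hs : (s, i) ∈ E) :
    InF i (Fin.snoc a i) (Fin.snoc b (i + 1)) (insert (s, i + 1) (E.erase (s, i))) ∧
    ∀ (σ : Equiv.Perm (Fin q)) (τ : Equiv.Perm (Fin (q + 1))),
      IsLinkingPerm E a b σ →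
      IsLinkingPerm (insert (s, i + 1) (E.erase (s, i)))
        (Fin.snoc a i) (Fin.snoc b (i + 1)) τ →
      signValue i (Fin.snoc b (i + 1)) τ (insert (s, i + 1) (E.erase (s, i)))
          (srcSet (Fin.snoc a i)) (srcSet (Fin.snoc b (i + 1)))
        = - signValue i b σ E (srcSet a) (srcSet b) := by
  obtain ⟨hf, hle⟩ := hE
  have hi := mem_transitSet.mp htr
  have hsrc : i + 1 ∉ srcSet a := by
    simpa [srcSet] using fun j => ((hai j).trans_lt (lt_add_one i)).ne
  have hsnk : i + 1 ∉ srcSet b := by simpa [srcSet] using hsink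
  have H : Reroutable E (srcSet a) (srcSet b) s i (i + 1) :=
    { isFlow := hf, mem := hs, not_mem_sinks := hi.2.2
      new_not_mem_sources := hsrc, new_not_mem_sinks := hsnk
      new_not_mem_vertexSet := fun hv =>
        (lt_add_one i).not_ge (hle _ (mem_transitSet.mpr ⟨hv, hsrc, hsnk⟩))
      lt_new := (hf.edge_lt _ hs).trans (lt_add_one i) }
  have hT := H.transitSet_reroute
  rw [← srcSet_snoc, ← srcSet_snoc] at hT
  refine ⟨⟨?_, fun v hv => hle v (mem_erase.mp (by rw [← hT]; exact hv)).2⟩,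
    fun σ τ hσ hτ => signValue_snoc_add_one (H.sign_linkingPerm_reroute hb.injective hσ hτ)
      hbi hT htr⟩
  rw [srcSet_snoc, srcSet_snoc]
  exact H.isFlow_reroute

/-- Lemma 15: let `Γ ∈ 𝓕_i(a_1,…,a_q; b_1,…,b_q)` with `i + 1` not a sink and
`i` a transit point of `Γ`. Then `M_1(Γ)` (replacing the edge `(s, i)` by
`(s, i + 1)`) belongs to `𝓕_i(a_1,…,a_q, i; b_1,…,b_q, i + 1)` and has `i`-sign
opposite to that of `Γ`. -/
theorem statement5 {q : ℕ} (i : ℤ) (a b : Fin q → ℤ)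
    (ha : StrictMono a) (hb : StrictAnti b)
    (hai : ∀ j, a j ≤ i) (hbi : ∀ j, i < b j)
    (E : FlowGraph) (hE : InF i a b E)
    (hsink : ∀ j, b j ≠ i + 1)
    (htr : IsTransitPoint E (srcSet a) (srcSet b) i)
    (s : ℤ) (hs : (s, i) ∈ E) :
    InF i (Fin.snoc a i) (Fin.snoc b (i + 1)) (insert (s, i + 1) (E.erase (s, i))) ∧
    ∀ (σ : Equiv.Perm (Fin q)) (τ : Equiv.Perm (Fin (q + 1))),
      IsLinkingPerm E a b σ →
      IsLinkingPerm (insert (s, i + 1) (E.erase (s, i)))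
        (Fin.snoc a i) (Fin.snoc b (i + 1)) τ →
      signValue i (Fin.snoc b (i + 1)) τ (insert (s, i + 1) (E.erase (s, i)))
          (srcSet (Fin.snoc a i)) (srcSet (Fin.snoc b (i + 1)))
        = - signValue i b σ E (srcSet a) (srcSet b) :=
  statement5_general i a b hb hai hbi E hE hsink htr s hs
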